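/- arXiv:1706.03045 — 3 statements merged into one kernel-verified Lean document; each statement's English description precedes it below -/
import Mathlib

section
/- For every cube Q ⊂ Q₀, every s ∈ (0,1), every c ∈ ℝ, every f ∈ L¹(Q₀), and every λ > 0 one has |{y ∈ Q : M^#_{s,Q} f(y) > λ}| ≤ (4ⁿ/s) |{y ∈ Q : |f(y) − c| > λ}|. -/
open MeasureTheory ENNReal NNReal Set Filter

noncomputable section

/-- An axis-parallel cube in `ℝⁿ` (modeled as `Fin n → ℝ`), given by its lower-left
corner and (positive) side length. -/
structure Cube (n : ℕ) where
  corner : Fin n → ℝ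
  side : ℝ
  side_pos : 0 < side

namespace Cube

/-- The underlying set of a cube. -/
def set {n : ℕ} (Q : Cube n) : Set (Fin n → ℝ) :=
  Set.Icc Q.corner fun i => Q.corner i + Q.side

/-- The volume `|Q|` of a cube, as an extended nonnegative real. -/
def vol {n : ℕ} (Q : Cube n) : ℝ≥0∞ :=
  volume Q.set

end Cube

variable {n : ℕ}

/-- The mean value `f_Q = (1/|Q|) ∫_Q f`. -/
def cubeAvg (f : (Fin n → ℝ) → ℝ) (Q : Cube n) : ℝ :=
  (∫ x in Q.set, f x) / (volume Q.set).toReal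

/-- `(1/|Q|) ∫_Q ∫_Q |f x - f y| dx dy`, as an extended nonnegative real. -/
def dblOsc (f : (Fin n → ℝ) → ℝ) (Q : Cube n) : ℝ≥0∞ :=
  (∫⁻ x in Q.set, ∫⁻ y in Q.set, ENNReal.ofReal |f x - f y|) / Q.vol

/-- `(1/|Q|) ∫_Q |f - f_Q|`, as an extended nonnegative real. -/
def oscAvg (f : (Fin n → ℝ) → ℝ) (Q : Cube n) : ℝ≥0∞ :=
  (∫⁻ x in Q.set, ENNReal.ofReal |f x - cubeAvg f Q|) / Q.vol

/-- A packing of `Q₀`: a countable family of subcubes of `Q₀` with pairwise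
disjoint interiors. -/
def IsPacking (Q₀ : Cube n) (π : Set (Cube n)) : Prop :=
  π.Countable ∧ (∀ Q ∈ π, Q.set ⊆ Q₀.set) ∧
    π.Pairwise fun Q Q' => Disjoint (interior Q.set) (interior Q'.set)

/-- `γ ∈ Γ_f`: `γ` is integrable on `Q₀` and for every packing `{Qᵢ}` of `Q₀`,
`Σᵢ (1/|Qᵢ|) ∫_{Qᵢ}∫_{Qᵢ} |f x - f y| ≤ Σᵢ ∫_{Qᵢ} γ`. -/
def MemGamma (Q₀ : Cube n) (f γ : (Fin n → ℝ) → ℝ) : Prop :=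
  IntegrableOn γ Q₀.set volume ∧
    ∀ π : Set (Cube n), IsPacking Q₀ π →
      ∑' Q : π, dblOsc f (Q : Cube n) ≤
        ∑' Q : π, ENNReal.ofReal (∫ x in (Q : Cube n).set, γ x)

/-- The subcubes of `Q₀` containing the point `x`. -/
def subcubesAt (Q₀ : Cube n) (x : Fin n → ℝ) : Set (Cube n) :=
  {Q | Q.set ⊆ Q₀.set ∧ x ∈ Q.set}

/-- The sharp maximal function `f^#_{Q₀}(x) = sup_{Q₀ ⊇ Q ∋ x} (1/|Q|) ∫_Q |f - f_Q|`. -/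
def sharpMax (Q₀ : Cube n) (f : (Fin n → ℝ) → ℝ) (x : Fin n → ℝ) : ℝ≥0∞ :=
  ⨆ Q ∈ subcubesAt Q₀ x, oscAvg f Q

/-- Hardy–Littlewood maximal function of an `ℝ≥0∞`-valued function. -/
def hlMaxE (Q₀ : Cube n) (g : (Fin n → ℝ) → ℝ≥0∞) (x : Fin n → ℝ) : ℝ≥0∞ :=
  ⨆ Q ∈ subcubesAt Q₀ x, (∫⁻ y in Q.set, g y) / Q.vol

/-- Hardy–Littlewood maximal function `M_{Q₀} g (x) = sup_{Q₀ ⊇ Q ∋ x} (1/|Q|) ∫_Q |g|`. -/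
def hlMax (Q₀ : Cube n) (g : (Fin n → ℝ) → ℝ) (x : Fin n → ℝ) : ℝ≥0∞ :=
  hlMaxE Q₀ (fun y => ENNReal.ofReal |g y|) x

/-- `inf_{c ∈ ℝ} inf {α ≥ 0 : |{y ∈ Q : |f y - c| > α}| < s |Q|}`. -/
def oscS (s : ℝ) (f : (Fin n → ℝ) → ℝ) (Q : Cube n) : ℝ≥0∞ :=
  ⨅ c : ℝ,
    sInf {a : ℝ≥0∞ | volume {y ∈ Q.set | a < ENNReal.ofReal |f y - c|} < ENNReal.ofReal s * Q.vol}

/-- The Strömberg–Jawerth–Torchinsky local maximal function `M^#_{s,Q₀} f`. -/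
def locSharpMax (s : ℝ) (Q₀ : Cube n) (f : (Fin n → ℝ) → ℝ) (x : Fin n → ℝ) : ℝ≥0∞ :=
  ⨆ Q ∈ subcubesAt Q₀ x, oscS s f Q

/-- The decreasing rearrangement (on `(0,1)`, extended-real-valued) of an
`ℝ≥0∞`-valued function on `Q₀`. -/
def rearr (Q₀ : Cube n) (g : (Fin n → ℝ) → ℝ≥0∞) (t : ℝ) : ℝ≥0∞ :=
  sInf {a : ℝ≥0∞ | volume {x ∈ Q₀.set | a < g x} ≤ ENNReal.ofReal t}

/-- The decreasing rearrangement `f*` of a real function on `Q₀`. -/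
def rearrF (Q₀ : Cube n) (f : (Fin n → ℝ) → ℝ) : ℝ → ℝ≥0∞ :=
  rearr Q₀ fun x => ENNReal.ofReal |f x|

/-- A rearrangement invariant (Banach function) space, described through its
representation space on `(0,1)`: an extended-real-valued function norm `N` on
(`ℝ≥0∞`-valued) functions on `(0,1)` which is rearrangement invariant, has the
Fatou property, contains `L^∞(0,1)` and embeds into `L¹(0,1)`. -/
structure RISpace where
  N : (ℝ → ℝ≥0∞) → ℝ≥0∞
  add_le : ∀ f g : ℝ → ℝ≥0∞, Measurable f → Measurable g → N (f + g) ≤ N f + N g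
  smul_eq : ∀ (c : ℝ≥0) (f : ℝ → ℝ≥0∞), N (fun t => (c : ℝ≥0∞) * f t) = (c : ℝ≥0∞) * N f
  mono : ∀ f g : ℝ → ℝ≥0∞, (∀ᵐ t ∂volume.restrict (Set.Ioo (0:ℝ) 1), f t ≤ g t) → N f ≤ N g
  rearr_inv : ∀ f g : ℝ → ℝ≥0∞, Measurable f → Measurable g →
    (∀ a : ℝ≥0∞, volume {t ∈ Set.Ioo (0:ℝ) 1 | a < f t} = volume {t ∈ Set.Ioo (0:ℝ) 1 | a < g t}) →
    N f = N g
  eq_zero_iff : ∀ f : ℝ → ℝ≥0∞, Measurable f →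
    (N f = 0 ↔ f =ᵐ[volume.restrict (Set.Ioo (0:ℝ) 1)] 0)
  fatou : ∀ f : ℕ → ℝ → ℝ≥0∞, (∀ k, Measurable (f k)) → Monotone f →
    N (fun t => ⨆ k, f k t) = ⨆ k, N (f k)
  indicator_lt_top : N ((Set.Ioo (0:ℝ) 1).indicator fun _ => 1) < ⊤
  le_L1 : ∃ C : ℝ≥0∞, C ≠ ⊤ ∧ ∀ f : ℝ → ℝ≥0∞, Measurable f →
    (∫⁻ t in Set.Ioo (0:ℝ) 1, f t) ≤ C * N f

/-- The norm in `X` of an `ℝ≥0∞`-valued function on `Q₀`, computed through the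
representation space: `‖g‖_X = ‖g*‖_{X̄}`. -/
def RISpace.normE (X : RISpace) (Q₀ : Cube n) (g : (Fin n → ℝ) → ℝ≥0∞) : ℝ≥0∞ :=
  X.N (rearr Q₀ g)

/-- The norm `‖f‖_X = ‖f*‖_{X̄}` of a real function on `Q₀`. -/
def RISpace.normF (X : RISpace) (Q₀ : Cube n) (f : (Fin n → ℝ) → ℝ) : ℝ≥0∞ :=
  X.N (rearrF Q₀ f)

/-- The Garsia–Rodemich functional `‖f‖_{GaRo_X} = inf {‖γ‖_X : γ ∈ Γ_f}`. -/
def GaRoNorm (X : RISpace) (Q₀ : Cube n) (f : (Fin n → ℝ) → ℝ) : ℝ≥0∞ :=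
  ⨅ γ ∈ {γ | MemGamma Q₀ f γ}, X.normF Q₀ γ

/-- `f ∈ GaRo_X`: `f ∈ L¹(Q₀)` and `Γ_f ∩ X ≠ ∅`. -/
def MemGaRo (X : RISpace) (Q₀ : Cube n) (f : (Fin n → ℝ) → ℝ) : Prop :=
  IntegrableOn f Q₀.set volume ∧ ∃ γ, MemGamma Q₀ f γ ∧ X.normF Q₀ γ < ⊤

/-- `f ∈ X`. -/
def MemX (X : RISpace) (Q₀ : Cube n) (f : (Fin n → ℝ) → ℝ) : Prop :=
  IntegrableOn f Q₀.set volume ∧ X.normF Q₀ f < ⊤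

/-- Decreasing rearrangement on `(0,1)` of an `ℝ≥0∞`-valued function on `(0,1)`. -/
def rearrI (g : ℝ → ℝ≥0∞) (t : ℝ) : ℝ≥0∞ :=
  sInf {a : ℝ≥0∞ | volume {u ∈ Set.Ioo (0:ℝ) 1 | a < g u} ≤ ENNReal.ofReal t}

/-- The dilation operator `σ_s g (t) = g*(t/s)` for `0 < t < min s 1`, `0` otherwise. -/
def dil (s : ℝ) (g : ℝ → ℝ≥0∞) (t : ℝ) : ℝ≥0∞ :=
  if 0 < t ∧ t < min s 1 then rearrI g (t / s) else 0

/-- The operator norm `‖σ_s‖_{X̄ → X̄}`. -/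
def RISpace.dilNorm (X : RISpace) (s : ℝ) : ℝ≥0∞ :=
  ⨆ g ∈ {g : ℝ → ℝ≥0∞ | Measurable g ∧ X.N g ≤ 1}, X.N (dil s g)

/-- The lower Boyd index `α_X = lim_{s → 0+} log ‖σ_s‖ / log s`. -/
def RISpace.boydLower (X : RISpace) : ℝ :=
  limUnder (nhdsWithin (0:ℝ) (Set.Ioi 0)) fun s : ℝ =>
    Real.log (X.dilNorm s).toReal / Real.log s

/-- The upper Boyd index `β_X = lim_{s → ∞} log ‖σ_s‖ / log s`. -/
def RISpace.boydUpper (X : RISpace) : ℝ :=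
  limUnder atTop fun s : ℝ => Real.log (X.dilNorm s).toReal / Real.log s

/-- The fundamental function `φ_X(s) = ‖χ_{(0,s)}‖_{X̄}`. -/
def RISpace.fund (X : RISpace) (s : ℝ) : ℝ≥0∞ :=
  X.N ((Set.Ioo (0:ℝ) s).indicator fun _ => 1)

/-- `X` is of fundamental type: `‖σ_t‖ ≤ C sup_{s > 0, st ≤ 1} φ_X(st)/φ_X(s)`. -/
def RISpace.FundamentalType (X : RISpace) : Prop :=
  ∃ C : ℝ≥0∞, C ≠ ⊤ ∧ ∀ t : ℝ, 0 < t →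
    X.dilNorm t ≤ C * ⨆ s ∈ {s : ℝ | 0 < s ∧ s * t ≤ 1}, X.fund (s * t) / X.fund s

/-- The `BMO(Q₀)` seminorm `sup_{Q ⊆ Q₀} (1/|Q|) ∫_Q |f - f_Q|`. -/
def bmoNormE (Q₀ : Cube n) (f : (Fin n → ℝ) → ℝ) : ℝ≥0∞ :=
  ⨆ Q ∈ {Q : Cube n | Q.set ⊆ Q₀.set}, oscAvg f Q

/-- The `L¹(Q₀)` norm, extended-real-valued. -/
def L1normE (Q₀ : Cube n) (f : (Fin n → ℝ) → ℝ) : ℝ≥0∞ :=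
  ∫⁻ x in Q₀.set, ENNReal.ofReal |f x|

/-- The Peetre K-functional for the couple `(L¹(Q₀), BMO(Q₀))` (modulo constants). -/
def KL1BMO (Q₀ : Cube n) (t : ℝ) (f : (Fin n → ℝ) → ℝ) : ℝ≥0∞ :=
  ⨅ g : (Fin n → ℝ) → ℝ,
    (L1normE Q₀ fun x => f x - g x) + ENNReal.ofReal t * bmoNormE Q₀ g

/-- The unit cube `[0,1] ⊆ ℝ¹`, used to model the interval `(0,1)`. -/
def unitCube : Cube 1 := ⟨fun _ => 0, 1, one_pos⟩

/-- The John–Nirenberg functional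
`‖f‖_{JN_p} = sup_π (Σᵢ |Qᵢ| ((1/|Qᵢ|) ∫_{Qᵢ} |f - f_{Qᵢ}|)^p)^{1/p}`. -/
def JNnorm (Q₀ : Cube n) (p : ℝ) (f : (Fin n → ℝ) → ℝ) : ℝ≥0∞ :=
  ⨆ π ∈ {π : Set (Cube n) | IsPacking Q₀ π},
    (∑' Q : π, (Q : Cube n).vol * oscAvg f (Q : Cube n) ^ p) ^ (1 / p)

/-- `γ ∈ Γ'_f`: `γ ∈ L¹(Q₀)` and `f^#_{Q₀} ≤ M_{Q₀} γ` on `Q₀`. -/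
def MemGammaP (Q₀ : Cube n) (f γ : (Fin n → ℝ) → ℝ) : Prop :=
  IntegrableOn γ Q₀.set volume ∧ ∀ x ∈ Q₀.set, sharpMax Q₀ f x ≤ hlMax Q₀ γ x

/-- `S_{π,#}(f) = Σ_{Q ∈ π} ((1/|Q|) ∫_Q |f - f_Q|) χ_Q`. -/
def packFn (π : Set (Cube n)) (f : (Fin n → ℝ) → ℝ) (x : Fin n → ℝ) : ℝ≥0∞ :=
  ∑' Q : π, (Q : Cube n).set.indicator (fun _ => oscAvg f (Q : Cube n)) x

/-- `F_{f,#}(t) = sup_{π packing} (S_{π,#}(f))*(t)`. -/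
def Fsharp (Q₀ : Cube n) (f : (Fin n → ℝ) → ℝ) (t : ℝ) : ℝ≥0∞ :=
  ⨆ π ∈ {π : Set (Cube n) | IsPacking Q₀ π}, rearr Q₀ (packFn π f) t

/-- The `GaRo_{∞,λ}` functional: the least constant `C` such that, for every packing,
`Σᵢ (1/|Qᵢ|) ∫∫ |f x - f y| ≤ C Σᵢ |Qᵢ|^{1+λ/n}`. -/
def GaRoLamNorm (Q₀ : Cube n) (lam : ℝ) (f : (Fin n → ℝ) → ℝ) : ℝ≥0∞ :=
  sInf {C : ℝ≥0∞ | ∀ π : Set (Cube n), IsPacking Q₀ π →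
    ∑' Q : π, dblOsc f (Q : Cube n) ≤ C * ∑' Q : π, (Q : Cube n).vol ^ (1 + lam / (n : ℝ))}

/-- The homogeneous Campanato seminorm
`‖f‖_{𝓛̇^{1,λ}} = sup_{Q ⊆ Q₀} |Q|^{-λ/n} (1/|Q|) ∫_Q |f - f_Q|`. -/
def campNorm (Q₀ : Cube n) (lam : ℝ) (f : (Fin n → ℝ) → ℝ) : ℝ≥0∞ :=
  ⨆ Q ∈ {Q : Cube n | Q.set ⊆ Q₀.set}, Q.vol ^ (-(lam / (n : ℝ))) * oscAvg f Q

/-- The Gagliardo (fractional Sobolev) seminorm `‖f‖_{W^{α,p}}` on `Q₀`. -/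
def sobNorm (Q₀ : Cube n) (a p : ℝ) (f : (Fin n → ℝ) → ℝ) : ℝ≥0∞ :=
  (∫⁻ x in Q₀.set, ∫⁻ y in Q₀.set,
      ENNReal.ofReal
        (|f x - f y| ^ p / Real.sqrt (∑ i, (x i - y i) ^ 2) ^ ((n : ℝ) + a * p))) ^ (1 / p)

/-! Every point of the level set `{M^#_{s,Q} f > λ}` lies in a subcube `P ⊆ Q` on which
`|f - c| > λ` holds on a proportion at least `s` of `P`. Cubes are closed balls for the sup
norm, so the Vitali covering lemma extracts a disjoint subfamily whose fourfold enlargements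
cover the level set; each enlargement has `4ⁿ` times the volume of its cube, which is at most
`1/s` times the volume of `{|f - c| > λ}` inside it. -/

open Metric

section VitaliWeakType

variable {α : Type*} [PseudoMetricSpace α] [TopologicalSpace.SeparableSpace α]
  [MeasurableSpace α] [OpensMeasurableSpace α]

theorem measure_mul_le_of_forall_mem_closedBall (μ : Measure α) {K t : ℝ≥0∞}
    (hK : ∀ x r, 0 < r → μ (closedBall x (4 * r)) ≤ K * μ (closedBall x r))
    {U E : Set α} (R : ℝ)
    (hU : ∀ y ∈ U, ∃ x r, 0 < r ∧ r ≤ R ∧ y ∈ closedBall x r ∧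
      t * μ (closedBall x r) ≤ μ (closedBall x r ∩ E)) :
    t * μ U ≤ K * μ E := by
  choose! x r hr hrR hyB hB using hU
  obtain ⟨u, huU, hdisj, hcov⟩ :=
    Vitali.exists_disjoint_subfamily_covering_enlargement (fun y => closedBall (x y) (r y)) U r
      (3 / 2) (by norm_num) (fun y hy => (hr y hy).le) R hrR
      (fun y hy => ⟨y, hyB y hy⟩)
  have hu : u.Countable := hdisj.countable_of_nonempty_interior fun y hy =>
    (nonempty_ball.2 (hr y (huU hy))).mono
      (interior_maximal ball_subset_closedBall isOpen_ball)
  -- `B(y)` meets some chosen `B(b)` with `r y ≤ 3/2 r b`, and `2 r y + r b ≤ 4 r b`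
  have hU_sub : U ⊆ ⋃ b ∈ u, closedBall (x b) (4 * r b) := by
    intro y hy
    obtain ⟨b, hbu, ⟨p, hpy, hpb⟩, hrb⟩ := hcov y hy
    refine mem_biUnion hbu (mem_closedBall.2 ?_)
    calc dist y (x b) ≤ dist y (x y) + dist p (x y) + dist p (x b) :=
          (dist_triangle4 _ _ p _).trans_eq (by rw [dist_comm (x y) p])
      _ ≤ r y + r y + r b := add_le_add_three (hyB y hy) hpy hpb
      _ ≤ 4 * r b := by linarith [hr b (huU hbu)]
  calc t * μ U ≤ t * ∑' b : u, μ (closedBall (x b) (4 * r b)) :=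
        mul_le_mul_right ((measure_mono hU_sub).trans (measure_biUnion_le μ hu _)) t
    _ ≤ t * ∑' b : u, K * μ (closedBall (x b) (r b)) := by
        gcongr with b
        exact hK _ _ (hr b (huU b.2))
    _ = K * ∑' b : u, t * μ (closedBall (x b) (r b)) := by
        rw [ENNReal.tsum_mul_left, ENNReal.tsum_mul_left, mul_left_comm]
    _ ≤ K * ∑' b : u, μ (closedBall (x b) (r b) ∩ E) := by
        gcongr with b
        exact hB b (huU b.2)
    _ = K * μ.restrict E (⋃ b ∈ u, closedBall (x b) (r b)) := by
        simp only [measure_biUnion hu hdisj fun _ _ => measurableSet_closedBall,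
          Measure.restrict_apply measurableSet_closedBall]
    _ ≤ K * μ.restrict E univ := by gcongr; exact subset_univ _
    _ = K * μ E := by rw [Measure.restrict_apply_univ]

end VitaliWeakType

theorem addHaar_closedBall_four_mul {E : Type*} [NormedAddCommGroup E] [NormedSpace ℝ E]
    [MeasurableSpace E] [BorelSpace E] [FiniteDimensional ℝ E] (μ : Measure E)
    [μ.IsAddHaarMeasure] (x : E) {r : ℝ} (hr : 0 ≤ r) :
    μ (closedBall x (4 * r)) = 4 ^ Module.finrank ℝ E * μ (closedBall x r) := by
  rw [Measure.addHaar_closedBall_mul μ x (by norm_num) hr,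
    Measure.addHaar_closedBall_center μ x, ENNReal.ofReal_pow (by norm_num), ENNReal.ofReal_ofNat]

namespace Cube

theorem set_eq_closedBall (P : Cube n) :
    P.set = closedBall (fun i => P.corner i + P.side / 2) (P.side / 2) := by
  rw [closedBall_pi _ (by linarith [P.side_pos])]
  ext z
  simp only [Cube.set, mem_Icc, Set.mem_pi, mem_univ, forall_const, Real.closedBall_eq_Icc,
    Pi.le_def]
  exact ⟨fun h i => ⟨by linarith [h.1 i], by linarith [h.2 i]⟩,
    fun h => ⟨fun i => by linarith [(h i).1], fun i => by linarith [(h i).2]⟩⟩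

theorem side_le_of_set_subset (hn : n ≠ 0) {P Q : Cube n} (h : P.set ⊆ Q.set) :
    P.side ≤ Q.side := by
  have hP := P.side_pos
  have i : Fin n := ⟨0, Nat.pos_of_ne_zero hn⟩
  have hlow := (h ⟨le_rfl, fun j => by simp only; linarith⟩ : P.corner ∈ Q.set).1 i
  have hup := (h ⟨fun j => by simp only; linarith, le_rfl⟩ :
    (fun j => P.corner j + P.side) ∈ Q.set).2 i
  simp only at hlow hup
  linarith

/-- In dimension `0` the side of a cube is not determined by its set, hence the explicit
bound on the radius. -/
theorem exists_closedBall_eq_of_set_subset {P Q : Cube n} (h : P.set ⊆ Q.set) :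
    ∃ x r, 0 < r ∧ r ≤ Q.side / 2 ∧ P.set = closedBall x r := by
  rcases eq_or_ne n 0 with rfl | hn
  · refine ⟨P.corner, Q.side / 2, by linarith [Q.side_pos], le_rfl,
      Set.ext fun z => by
        simp [Cube.set, Subsingleton.elim z P.corner, (half_pos Q.side_pos).le]⟩
  · exact ⟨_, _, by linarith [P.side_pos], by linarith [side_le_of_set_subset hn h],
      P.set_eq_closedBall⟩

end Cube

theorem le_volume_of_lt_oscS {s lam : ℝ} {f : (Fin n → ℝ) → ℝ} {P : Cube n}
    (h : ENNReal.ofReal lam < oscS s f P) (c : ℝ) :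
    ENNReal.ofReal s * P.vol ≤ volume {z ∈ P.set | lam < |f z - c|} := by
  by_contra! hlt
  refine (iInf_le _ c).trans (sInf_le ?_) |>.not_gt h
  rw [mem_ofPred_eq]
  refine (measure_mono fun z hz => ?_).trans_lt hlt
  exact ⟨hz.1, (ENNReal.ofReal_lt_ofReal_iff'.1 hz.2).1⟩

theorem garsia_rodemich_stmt2_general {n : ℕ}
    (Q : Cube n) (s : ℝ) (hs : s ∈ Set.Ioo (0:ℝ) 1) (c : ℝ)
    (f : (Fin n → ℝ) → ℝ)
    (lam : ℝ) :
    volume {y ∈ Q.set | ENNReal.ofReal lam < locSharpMax s Q f y} ≤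
      (4 ^ n / ENNReal.ofReal s) * volume {y ∈ Q.set | lam < |f y - c|} := by
  set E := {y ∈ Q.set | lam < |f y - c|}
  have hcover : ∀ y ∈ {y ∈ Q.set | ENNReal.ofReal lam < locSharpMax s Q f y}, ∃ x r,
      0 < r ∧ r ≤ Q.side / 2 ∧ y ∈ closedBall x r ∧
        ENNReal.ofReal s * volume (closedBall x r) ≤ volume (closedBall x r ∩ E) := by
    rintro y ⟨-, hy⟩
    obtain ⟨P, ⟨hPQ, hyP⟩, hP⟩ :
        ∃ P ∈ subcubesAt Q y, ENNReal.ofReal lam < oscS s f P := by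
      simpa only [locSharpMax, lt_iSup_iff, exists_prop] using hy
    obtain ⟨x, r, hr, hrQ, hPx⟩ := Cube.exists_closedBall_eq_of_set_subset hPQ
    refine ⟨x, r, hr, hrQ, hPx ▸ hyP, hPx ▸ ?_⟩
    exact (le_volume_of_lt_oscS hP c).trans
      (measure_mono fun z hz => ⟨hz.1, hPQ hz.1, hz.2⟩)
  have hweak := measure_mul_le_of_forall_mem_closedBall volume
    (fun x r hr => by rw [addHaar_closedBall_four_mul volume x hr.le, Module.finrank_fin_fun])
    _ hcover
  rw [← ENNReal.mul_div_right_comm, ENNReal.le_div_iff_mul_le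
    (Or.inl (ENNReal.ofReal_pos.2 hs.1).ne') (Or.inl ENNReal.ofReal_ne_top), mul_comm]
  exact hweak

/-- Lemma: weak type bound for the local maximal function.
For every cube `Q ⊆ Q₀`, `s ∈ (0,1)`, `c ∈ ℝ`, `f ∈ L¹(Q₀)` and `λ > 0`:
`|{y ∈ Q : M^#_{s,Q} f y > λ}| ≤ (4ⁿ/s) |{y ∈ Q : |f y - c| > λ}|`. -/
theorem garsia_rodemich_stmt2 {n : ℕ} (Q₀ : Cube n) (hQ₀ : volume Q₀.set = 1)
    (Q : Cube n) (hQ : Q.set ⊆ Q₀.set) (s : ℝ) (hs : s ∈ Set.Ioo (0:ℝ) 1) (c : ℝ)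
    (f : (Fin n → ℝ) → ℝ) (hf : IntegrableOn f Q₀.set volume)
    (lam : ℝ) (hlam : 0 < lam) :
    volume {y ∈ Q.set | ENNReal.ofReal lam < locSharpMax s Q f y} ≤
      (4 ^ n / ENNReal.ofReal s) * volume {y ∈ Q.set | lam < |f y - c|} :=
  garsia_rodemich_stmt2_general Q s hs c f lam

end
end

section
/- There exists s₀ ∈ (0,1), depending only on the dimension n, such that for all s ∈ (0, s₀), all f ∈ L¹(Q₀), and all x ∈ Q₀, one has M_{Q₀}(M^#_{s,Q₀} f)(x) ≤ (2·8ⁿ/s) f^#_{Q₀}(x). -/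
open MeasureTheory ENNReal NNReal Set Filter

noncomputable section

variable {n : ℕ}

/-!
Fix a subcube `Q ∋ x` of `Q₀` with side `ℓ` and a point `y ∈ Q`. A cube `R ∋ y` of side
`> ℓ/6` lies, together with `Q`, in a subcube of `Q₀` of side `≤ 7 side(R)` containing `x`, so
Chebyshev's inequality bounds its contribution to `M^#_{s,Q₀} f(y)` by `7ⁿ f^#(x) / s`. The cubes
of side `≤ ℓ/6` lie in a subcube `P ⊇ Q` of side `≤ 4ℓ/3`; for them we freeze the constant at
`f_P`. The Vitali covering lemma (enlargement `6`) gives the weak-type bound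
`s |{G > t}| ≤ 6ⁿ |{z ∈ P : |f z - f_P| > t}|` for the resulting maximal function `G`, and
integrating in `t` yields `∫ G ≤ 6ⁿ/s ∫_P |f - f_P| ≤ 8ⁿ/s |Q| f^#(x)`. Hence the average of
`M^#_{s,Q₀} f` over `Q` is at most `(7ⁿ + 8ⁿ)/s · f^#(x)`.
-/

namespace Cube

theorem mem_set_iff {Q : Cube n} {y : Fin n → ℝ} :
    y ∈ Q.set ↔ ∀ i, Q.corner i ≤ y i ∧ y i ≤ Q.corner i + Q.side := by
  simp [Cube.set, Pi.le_def, forall_and]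

theorem measurableSet_set (Q : Cube n) : MeasurableSet Q.set := measurableSet_Icc

theorem vol_eq (Q : Cube n) : Q.vol = ENNReal.ofReal Q.side ^ n := by
  simp [Cube.vol, Cube.set, Real.volume_Icc_pi]

theorem vol_ne_zero (Q : Cube n) : Q.vol ≠ 0 := by
  simp [vol_eq, Q.side_pos]

theorem vol_ne_top (Q : Cube n) : Q.vol ≠ ⊤ := by
  simp [vol_eq]

theorem vol_le_of_side_le {A B : Cube n} {k : ℝ} (hk : 0 ≤ k) (h : A.side ≤ k * B.side) :
    A.vol ≤ ENNReal.ofReal k ^ n * B.vol := by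
  rw [vol_eq, vol_eq, ← mul_pow, ← ENNReal.ofReal_mul hk]
  gcongr

theorem corner_mem_set (Q : Cube n) : Q.corner ∈ Q.set :=
  mem_set_iff.2 fun _ => ⟨le_rfl, by linarith [Q.side_pos]⟩

theorem set_subset_set_iff {A B : Cube n} :
    A.set ⊆ B.set ↔
      ∀ i, B.corner i ≤ A.corner i ∧ A.corner i + A.side ≤ B.corner i + B.side := by
  refine ⟨fun h i => ⟨(mem_set_iff.1 (h A.corner_mem_set) i).1,
    (mem_set_iff.1 (h (a := fun j => A.corner j + A.side) ?_) i).2⟩, fun h y hy => ?_⟩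
  · exact mem_set_iff.2 fun j => ⟨by linarith [A.side_pos], le_rfl⟩
  · exact mem_set_iff.2 fun i =>
      ⟨(h i).1.trans (mem_set_iff.1 hy i).1, (mem_set_iff.1 hy i).2.trans (h i).2⟩

-- Vitali's lemma needs bounded radii, but in dimension `0` all cubes are the same point,
-- so a subcube of `P` may have any side.
theorem exists_set_eq_side_le {R P : Cube n} (h : R.set ⊆ P.set) :
    ∃ R' : Cube n, R'.set = R.set ∧ R'.side ≤ P.side := by
  cases n with
  | zero => exact ⟨P, Set.ext fun y => ⟨fun _ => Subsingleton.elim R.corner y ▸ R.corner_mem_set,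
      fun _ => Subsingleton.elim P.corner y ▸ P.corner_mem_set⟩, le_rfl⟩
  | succ k => exact ⟨R, rfl, by linarith [set_subset_set_iff.1 h 0]⟩

def center (Q : Cube n) : Fin n → ℝ := fun i => Q.corner i + Q.side / 2

theorem set_eq_closedBall_s3 (Q : Cube n) : Q.set = Metric.closedBall Q.center (Q.side / 2) := by
  ext y
  simp only [mem_set_iff, mem_closedBall_iff_norm,
    pi_norm_le_iff_of_nonneg (half_pos Q.side_pos).le, Pi.sub_apply, Real.norm_eq_abs, abs_le,
    center]
  refine forall_congr' fun i => ?_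
  constructor <;> rintro ⟨h1, h2⟩ <;> constructor <;> linarith

theorem volume_closedBall_center (Q : Cube n) {τ : ℝ} (hτ : 0 ≤ τ) :
    volume (Metric.closedBall Q.center (τ * (Q.side / 2))) = ENNReal.ofReal τ ^ n * Q.vol := by
  have := Q.side_pos
  rw [Real.volume_pi_closedBall _ (by positivity), vol_eq, ← ENNReal.ofReal_pow hτ,
    ← ENNReal.ofReal_pow this.le, ← ENNReal.ofReal_mul (by positivity), ← mul_pow,
    Fintype.card_fin]
  ring_nf

theorem exists_subcube_superset (Q₀ : Cube n) {u v : Fin n → ℝ} {L : ℝ} (hL : 0 < L)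
    (huv : ∀ i, v i - u i ≤ L) :
    ∃ C : Cube n, C.side = min L Q₀.side ∧ Icc u v ∩ Q₀.set ⊆ C.set ∧ C.set ⊆ Q₀.set := by
  set L' := min L Q₀.side
  have hL' : L' ≤ Q₀.side := min_le_right _ _
  set a := fun i => min (max (u i) (Q₀.corner i)) (Q₀.corner i + Q₀.side - L')
  refine ⟨⟨a, L', lt_min hL Q₀.side_pos⟩, rfl, fun y ⟨huy, hy⟩ => mem_set_iff.2 fun i => ?_,
    set_subset_set_iff.2 fun i => ⟨le_min (le_max_right _ _) (by linarith), ?_⟩⟩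
  · obtain ⟨hy₁, hy₂⟩ := mem_set_iff.1 hy i
    have hvu := huv i
    have hvy := huy.2 i
    refine ⟨(min_le_left _ _).trans (max_le (huy.1 i) hy₁), ?_⟩
    rcases min_cases L Q₀.side with h | h <;>
      rcases max_cases (u i) (Q₀.corner i) with h' | h' <;>
      rcases min_cases (max (u i) (Q₀.corner i)) (Q₀.corner i + Q₀.side - L') with h'' | h'' <;>
      simp only [a] <;> linarith
  · linarith [min_le_right (max (u i) (Q₀.corner i)) (Q₀.corner i + Q₀.side - L')]

theorem exists_subcube_superset_union {Q₀ A B : Cube n} (hA : A.set ⊆ Q₀.set)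
    (hB : B.set ⊆ Q₀.set) {y : Fin n → ℝ} (hyA : y ∈ A.set) (hyB : y ∈ B.set) :
    ∃ C : Cube n, C.side ≤ A.side + B.side ∧ A.set ∪ B.set ⊆ C.set ∧ C.set ⊆ Q₀.set := by
  obtain ⟨C, hC, hsub, hCQ₀⟩ := exists_subcube_superset Q₀
    (u := fun i => min (A.corner i) (B.corner i))
    (v := fun i => max (A.corner i + A.side) (B.corner i + B.side))
    (add_pos A.side_pos B.side_pos) fun i => by
      have := mem_set_iff.1 hyA i
      have := mem_set_iff.1 hyB i
      rcases min_cases (A.corner i) (B.corner i) with h | h <;>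
        rcases max_cases (A.corner i + A.side) (B.corner i + B.side) with h' | h' <;>
        linarith
  refine ⟨C, hC ▸ min_le_left _ _,
    union_subset (fun z hz => hsub ⟨?_, hA hz⟩) (fun z hz => hsub ⟨?_, hB hz⟩), hCQ₀⟩
  · exact ⟨fun i => (min_le_left _ _).trans (mem_set_iff.1 hz i).1,
      fun i => (mem_set_iff.1 hz i).2.trans (le_max_left _ _)⟩
  · exact ⟨fun i => (min_le_right _ _).trans (mem_set_iff.1 hz i).1,
      fun i => (mem_set_iff.1 hz i).2.trans (le_max_right _ _)⟩

theorem exists_subcube_superset_thickening {Q₀ Q : Cube n} (hQ : Q.set ⊆ Q₀.set) {δ : ℝ}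
    (hδ : 0 ≤ δ) :
    ∃ C : Cube n, C.side ≤ Q.side + 2 * δ ∧ Q.set ⊆ C.set ∧ C.set ⊆ Q₀.set ∧
      ∀ R : Cube n, R.set ⊆ Q₀.set → (R.set ∩ Q.set).Nonempty → R.side ≤ δ → R.set ⊆ C.set := by
  obtain ⟨C, hC, hsub, hCQ₀⟩ := exists_subcube_superset Q₀
    (u := fun i => Q.corner i - δ) (v := fun i => Q.corner i + Q.side + δ)
    (L := Q.side + 2 * δ) (by linarith [Q.side_pos]) fun i => by linarith
  refine ⟨C, hC ▸ min_le_left _ _, fun z hz => hsub ⟨?_, hQ hz⟩, hCQ₀,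
    fun R hRQ₀ ⟨y, hyR, hyQ⟩ hR z hz => hsub ⟨?_, hRQ₀ hz⟩⟩
  · exact ⟨fun i => by linarith [(mem_set_iff.1 hz i).1],
      fun i => by linarith [(mem_set_iff.1 hz i).2]⟩
  · refine ⟨fun i => ?_, fun i => ?_⟩ <;>
    · obtain ⟨hyR₁, hyR₂⟩ := mem_set_iff.1 hyR i
      obtain ⟨hyQ₁, hyQ₂⟩ := mem_set_iff.1 hyQ i
      obtain ⟨hz₁, hz₂⟩ := mem_set_iff.1 hz i
      dsimp only
      linarith

end Cube

namespace MeasureTheory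

variable {α β ι : Type*} [MeasurableSpace α] [MeasurableSpace β]

theorem lintegral_le_lintegral_meas_lt (μ : Measure α) (g : α → ℝ≥0∞) :
    ∫⁻ a, g a ∂μ ≤ ∫⁻ t in Ioi (0 : ℝ), μ {a | ENNReal.ofReal t < g a} := by
  obtain ⟨g', hg', hg'g, hint⟩ := exists_measurable_le_lintegral_eq μ g
  have htrunc : ∀ k : ℕ, ∫⁻ a, min (g' a) k ∂μ
      ≤ ∫⁻ t in Ioi (0 : ℝ), μ {a | ENNReal.ofReal t < g a} := fun k => by
    have hfin : ∀ a, min (g' a) k ≠ ⊤ := fun a => (min_lt_of_right_lt (natCast_lt_top k)).ne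
    calc ∫⁻ a, min (g' a) k ∂μ = ∫⁻ a, ENNReal.ofReal (min (g' a) k).toReal ∂μ := by
          simp only [ENNReal.ofReal_toReal (hfin _)]
      _ = ∫⁻ t in Ioi (0 : ℝ), μ {a | t < (min (g' a) k).toReal} :=
          lintegral_eq_lintegral_meas_lt μ (.of_forall fun _ => toReal_nonneg)
            (hg'.min measurable_const).ennreal_toReal.aemeasurable
      _ ≤ ∫⁻ t in Ioi (0 : ℝ), μ {a | ENNReal.ofReal t < g a} :=
          setLIntegral_mono' measurableSet_Ioi fun t ht => measure_mono fun a ha =>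
            ((ENNReal.ofReal_lt_iff_lt_toReal (le_of_lt ht) (hfin a)).2 ha).trans_le
              ((min_le_left _ _).trans (hg'g a))
  calc ∫⁻ a, g a ∂μ = ∫⁻ a, ⨆ k : ℕ, min (g' a) k ∂μ := by
        simp only [hint, ← inf_iSup_eq, ENNReal.iSup_natCast, inf_top_eq]
    _ = ⨆ k : ℕ, ∫⁻ a, min (g' a) k ∂μ :=
        lintegral_iSup (fun k => hg'.min measurable_const)
          fun i j hij a => min_le_min le_rfl (Nat.cast_le.2 hij)
    _ ≤ _ := iSup_le htrunc

theorem mul_lintegral_le_of_mul_meas_lt_le {μ : Measure α} {ν : Measure β} {g : α → ℝ≥0∞}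
    {h : β → ℝ} (hh : AEMeasurable h ν) (h_nonneg : 0 ≤ᵐ[ν] h) {c C : ℝ≥0∞} (hC : C ≠ ⊤)
    (hgh : ∀ t : ℝ, 0 < t → c * μ {a | ENNReal.ofReal t < g a} ≤ C * ν {b | t < h b}) :
    c * ∫⁻ a, g a ∂μ ≤ C * ∫⁻ b, ENNReal.ofReal (h b) ∂ν := by
  calc c * ∫⁻ a, g a ∂μ ≤ c * ∫⁻ t in Ioi (0 : ℝ), μ {a | ENNReal.ofReal t < g a} := by
        gcongr; exact lintegral_le_lintegral_meas_lt μ g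
    _ ≤ ∫⁻ t in Ioi (0 : ℝ), c * μ {a | ENNReal.ofReal t < g a} := lintegral_const_mul_le _ _
    _ ≤ ∫⁻ t in Ioi (0 : ℝ), C * ν {b | t < h b} := setLIntegral_mono' measurableSet_Ioi hgh
    _ = C * ∫⁻ b, ENNReal.ofReal (h b) ∂ν := by
        rw [lintegral_const_mul' _ _ hC, lintegral_eq_lintegral_meas_lt ν h_nonneg hh]

theorem tsum_measure_inter_le [Countable ι] (μ : Measure α) {s : ι → Set α}
    (hd : Pairwise (Function.onFun Disjoint s)) (hs : ∀ i, MeasurableSet (s i)) (t : Set α) :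
    ∑' i, μ (t ∩ s i) ≤ μ t := by
  simp only [← Measure.restrict_apply' (hs _)]
  rw [← Measure.sum_apply_of_countable, ← Measure.restrict_iUnion hd hs]
  exact Measure.restrict_apply_le _ _

end MeasureTheory

def oscAt (s : ℝ) (f : (Fin n → ℝ) → ℝ) (c : ℝ) (Q : Cube n) : ℝ≥0∞ :=
  sInf {a : ℝ≥0∞ | volume {y ∈ Q.set | a < ENNReal.ofReal |f y - c|} < ENNReal.ofReal s * Q.vol}

theorem oscS_le_oscAt (s : ℝ) (f : (Fin n → ℝ) → ℝ) (c : ℝ) (Q : Cube n) :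
    oscS s f Q ≤ oscAt s f c Q :=
  iInf_le (fun c => oscAt s f c Q) c

theorem le_volume_of_lt_oscAt {s : ℝ} {f : (Fin n → ℝ) → ℝ} {c : ℝ} {Q : Cube n} {t : ℝ≥0∞}
    (ht : t < oscAt s f c Q) :
    ENNReal.ofReal s * Q.vol ≤ volume {y ∈ Q.set | t < ENNReal.ofReal |f y - c|} :=
  not_lt.1 fun h => ht.not_ge (sInf_le h)

theorem oscAt_congr_set {s : ℝ} {f : (Fin n → ℝ) → ℝ} {c : ℝ} {Q Q' : Cube n}
    (h : Q.set = Q'.set) : oscAt s f c Q = oscAt s f c Q' := by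
  simp only [oscAt, Cube.vol, h]

def locOscAtMax (s : ℝ) (P : Cube n) (f : (Fin n → ℝ) → ℝ) (c : ℝ) (y : Fin n → ℝ) : ℝ≥0∞ :=
  ⨆ R ∈ subcubesAt P y, oscAt s f c R

theorem ofReal_mul_volume_lt_locOscAtMax_le (s : ℝ) (P : Cube n) (f : (Fin n → ℝ) → ℝ) (c : ℝ)
    {τ : ℝ} (hτ : 3 < τ) (t : ℝ≥0∞) :
    ENNReal.ofReal s * volume {y | t < locOscAtMax s P f c y} ≤
      ENNReal.ofReal τ ^ n * volume {z ∈ P.set | t < ENNReal.ofReal |f z - c|} := by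
  set E := {z ∈ P.set | t < ENNReal.ofReal |f z - c|}
  set F := {R : Cube n | R.set ⊆ P.set ∧ R.side ≤ P.side ∧ t < oscAt s f c R}
  have hcover : {y | t < locOscAtMax s P f c y} ⊆ ⋃ R ∈ F, R.set := fun y hy => by
    obtain ⟨R, ⟨hRP, hyR⟩, hR⟩ :=
      lt_biSup_iff.1 (show t < ⨆ R ∈ subcubesAt P y, oscAt s f c R from hy)
    obtain ⟨R', hR'R, hR'⟩ := Cube.exists_set_eq_side_le hRP
    exact mem_biUnion ⟨hR'R ▸ hRP, hR', oscAt_congr_set hR'R ▸ hR⟩ (hR'R ▸ hyR)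
  obtain ⟨u, huF, hdisj, hcov⟩ :=
    Vitali.exists_disjoint_subfamily_covering_enlargement_closedBall F Cube.center
      (fun R => R.side / 2) P.side
      (fun R hR => by linarith [hR.2.1, R.side_pos]) τ hτ
  simp only [← Cube.set_eq_closedBall_s3] at hdisj hcov
  have hu : u.Countable := hdisj.countable_of_nonempty_interior fun R _ => by
    rw [Cube.set_eq_closedBall_s3]
    exact (Metric.nonempty_ball.2 (half_pos R.side_pos)).mono
      Metric.ball_subset_interior_closedBall
  have : Countable u := hu.to_subtype
  set B := fun R : Cube n => Metric.closedBall R.center (τ * (R.side / 2))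
  calc ENNReal.ofReal s * volume {y | t < locOscAtMax s P f c y}
      ≤ ENNReal.ofReal s * volume (⋃ R ∈ u, B R) := by
        gcongr
        refine hcover.trans (iUnion₂_subset fun R hR => ?_)
        obtain ⟨R', hR', hRR'⟩ := hcov R hR
        exact hRR'.trans (subset_biUnion_of_mem (u := B) hR')
    _ ≤ ENNReal.ofReal s * ∑' R : u, volume (B R) := by
        gcongr
        exact measure_biUnion_le _ hu _
    _ = ENNReal.ofReal τ ^ n * ∑' R : u, ENNReal.ofReal s * R.1.vol := by
        simp only [B, Cube.volume_closedBall_center _ (by linarith : (0:ℝ) ≤ τ),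
          ENNReal.tsum_mul_left]
        ring
    _ ≤ ENNReal.ofReal τ ^ n * ∑' R : u, volume (E ∩ R.1.set) := by
        gcongr with R
        exact (le_volume_of_lt_oscAt (huF R.2).2.2).trans
          (measure_mono fun y hy => ⟨⟨(huF R.2).1 hy.1, hy.2⟩, hy.1⟩)
    _ ≤ ENNReal.ofReal τ ^ n * volume E := by
        gcongr
        exact tsum_measure_inter_le volume (hdisj.subtype _ _) (fun R => R.1.measurableSet_set) E

theorem ofReal_mul_lintegral_locOscAtMax_le (s : ℝ) {P : Cube n} {f : (Fin n → ℝ) → ℝ}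
    (hf : AEMeasurable f (volume.restrict P.set)) (c : ℝ) {τ : ℝ} (hτ : 3 < τ) :
    ENNReal.ofReal s * ∫⁻ y, locOscAtMax s P f c y ≤
      ENNReal.ofReal τ ^ n * ∫⁻ z in P.set, ENNReal.ofReal |f z - c| := by
  refine mul_lintegral_le_of_mul_meas_lt_le (hf.sub_const c).abs (.of_forall fun _ => abs_nonneg _)
    (by simp) fun t ht => ?_
  rw [Measure.restrict_apply' P.measurableSet_set]
  convert ofReal_mul_volume_lt_locOscAtMax_le s P f c hτ (ENNReal.ofReal t) using 3
  ext z
  simp [ENNReal.ofReal_lt_ofReal_iff_of_nonneg ht.le, and_comm]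

theorem oscAt_le_lintegral_div {s : ℝ} (hs : 0 < s) {f : (Fin n → ℝ) → ℝ} {Q : Cube n}
    (hf : AEMeasurable f (volume.restrict Q.set)) (c : ℝ) :
    oscAt s f c Q ≤ (∫⁻ y in Q.set, ENNReal.ofReal |f y - c|) / (ENNReal.ofReal s * Q.vol) := by
  have hpos : ENNReal.ofReal s * Q.vol ≠ 0 := mul_ne_zero (by simpa using hs) Q.vol_ne_zero
  have hfin : ENNReal.ofReal s * Q.vol ≠ ⊤ := mul_ne_top ofReal_ne_top Q.vol_ne_top
  refine le_of_forall_gt_imp_ge_of_dense fun t ht => sInf_le ?_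
  rcases eq_or_ne t ⊤ with rfl | htop
  · simpa using pos_iff_ne_zero.2 hpos
  have ht0 : t ≠ 0 := (pos_of_gt ht).ne'
  calc volume {y ∈ Q.set | t < ENNReal.ofReal |f y - c|}
      ≤ volume.restrict Q.set {y | t ≤ ENNReal.ofReal |f y - c|} := by
        rw [Measure.restrict_apply' Q.measurableSet_set]
        exact measure_mono fun y hy => ⟨hy.2.le, hy.1⟩
    _ ≤ (∫⁻ y in Q.set, ENNReal.ofReal |f y - c|) / t :=
        meas_ge_le_lintegral_div (hf.sub_const c).abs.ennreal_ofReal ht0 htop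
    _ < ENNReal.ofReal s * Q.vol := by
        rwa [ENNReal.div_lt_iff (.inl ht0) (.inl htop), mul_comm,
          ← ENNReal.div_lt_iff (.inl hpos) (.inl hfin)]

theorem oscS_le_oscAvg_mul_vol_div {s : ℝ} (hs : 0 < s) {f : (Fin n → ℝ) → ℝ} {R P : Cube n}
    (hf : AEMeasurable f (volume.restrict R.set)) (hRP : R.set ⊆ P.set) :
    oscS s f R ≤ oscAvg f P * P.vol / (ENNReal.ofReal s * R.vol) :=
  calc oscS s f R ≤ oscAt s f (cubeAvg f P) R := oscS_le_oscAt _ _ _ _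
    _ ≤ (∫⁻ y in R.set, ENNReal.ofReal |f y - cubeAvg f P|) / (ENNReal.ofReal s * R.vol) :=
        oscAt_le_lintegral_div hs hf _
    _ ≤ (∫⁻ y in P.set, ENNReal.ofReal |f y - cubeAvg f P|) / (ENNReal.ofReal s * R.vol) := by
        gcongr
    _ = oscAvg f P * P.vol / (ENNReal.ofReal s * R.vol) := by
        rw [oscAvg, ENNReal.div_mul_cancel P.vol_ne_zero P.vol_ne_top]

theorem locSharpMax_le_add {s : ℝ} (hs : 0 < s) {Q₀ Q P : Cube n} {f : (Fin n → ℝ) → ℝ}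
    (hf : IntegrableOn f Q₀.set) {x : Fin n → ℝ} (hQ : Q ∈ subcubesAt Q₀ x)
    (hP : ∀ R : Cube n, R.set ⊆ Q₀.set → (R.set ∩ Q.set).Nonempty → R.side ≤ Q.side / 6 →
      R.set ⊆ P.set)
    (c : ℝ) {y : Fin n → ℝ} (hy : y ∈ Q.set) :
    locSharpMax s Q₀ f y ≤
      ENNReal.ofReal 7 ^ n / ENNReal.ofReal s * sharpMax Q₀ f x + locOscAtMax s P f c y := by
  refine iSup₂_le fun R ⟨hRQ₀, hyR⟩ => ?_
  rcases le_or_gt R.side (Q.side / 6) with hsmall | hlarge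
  · calc oscS s f R ≤ oscAt s f c R := oscS_le_oscAt _ _ _ _
      _ ≤ locOscAtMax s P f c y :=
          le_iSup₂ (f := fun R (_ : R ∈ subcubesAt P y) => oscAt s f c R) R
            ⟨hP R hRQ₀ ⟨y, hyR, hy⟩ hsmall, hyR⟩
      _ ≤ _ := le_add_self
  · obtain ⟨C, hCside, hRQC, hCQ₀⟩ := Cube.exists_subcube_superset_union hRQ₀ hQ.1 hyR hy
    have hCvol : C.vol ≤ ENNReal.ofReal 7 ^ n * R.vol :=
      Cube.vol_le_of_side_le (by norm_num) (by linarith)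
    calc oscS s f R ≤ oscAvg f C * C.vol / (ENNReal.ofReal s * R.vol) :=
          oscS_le_oscAvg_mul_vol_div hs (hf.mono_set hRQ₀).aemeasurable
            (subset_union_left.trans hRQC)
      _ ≤ sharpMax Q₀ f x * (ENNReal.ofReal 7 ^ n * R.vol) / (ENNReal.ofReal s * R.vol) := by
          gcongr
          exact le_iSup₂ (f := fun C (_ : C ∈ subcubesAt Q₀ x) => oscAvg f C) C
            ⟨hCQ₀, hRQC (subset_union_right hQ.2)⟩
      _ = ENNReal.ofReal 7 ^ n / ENNReal.ofReal s * sharpMax Q₀ f x := by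
          rw [← mul_assoc, ENNReal.mul_div_mul_right _ _ R.vol_ne_zero R.vol_ne_top,
            mul_comm, ENNReal.mul_div_right_comm]
      _ ≤ _ := le_self_add

theorem setLIntegral_locSharpMax_le {s : ℝ} (hs : 0 < s) {Q₀ Q : Cube n}
    {f : (Fin n → ℝ) → ℝ} (hf : IntegrableOn f Q₀.set) {x : Fin n → ℝ}
    (hQ : Q ∈ subcubesAt Q₀ x) :
    ∫⁻ y in Q.set, locSharpMax s Q₀ f y ≤
      (ENNReal.ofReal 7 ^ n + ENNReal.ofReal 8 ^ n) / ENNReal.ofReal s * sharpMax Q₀ f x *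
        Q.vol := by
  obtain ⟨P, hPside, hQP, hPQ₀, hP⟩ :=
    Cube.exists_subcube_superset_thickening hQ.1 (δ := Q.side / 6) (by linarith [Q.side_pos])
  set S := ENNReal.ofReal s
  set M := sharpMax Q₀ f x
  set G := locOscAtMax s P f (cubeAvg f P)
  have hPvol : P.vol ≤ ENNReal.ofReal (4 / 3) ^ n * Q.vol :=
    Cube.vol_le_of_side_le (by norm_num) (by linarith)
  have hPM : oscAvg f P ≤ M :=
    le_iSup₂ (f := fun C (_ : C ∈ subcubesAt Q₀ x) => oscAvg f C) P ⟨hPQ₀, hQP hQ.2⟩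
  have hG : ∫⁻ y, G y ≤ ENNReal.ofReal 8 ^ n / S * M * Q.vol := by
    have hSG : S * ∫⁻ y, G y ≤ ENNReal.ofReal 8 ^ n * M * Q.vol :=
      calc S * ∫⁻ y, G y
          ≤ ENNReal.ofReal 6 ^ n * ∫⁻ z in P.set, ENNReal.ofReal |f z - cubeAvg f P| :=
            ofReal_mul_lintegral_locOscAtMax_le s (hf.mono_set hPQ₀).aemeasurable _ (by norm_num)
        _ = ENNReal.ofReal 6 ^ n * (oscAvg f P * P.vol) := by
            rw [oscAvg, ENNReal.div_mul_cancel P.vol_ne_zero P.vol_ne_top]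
        _ ≤ ENNReal.ofReal 6 ^ n * (M * (ENNReal.ofReal (4 / 3) ^ n * Q.vol)) := by gcongr
        _ = ENNReal.ofReal 8 ^ n * M * Q.vol := by
            rw [show (8 : ℝ) = 6 * (4 / 3) by norm_num, ENNReal.ofReal_mul (by norm_num), mul_pow]
            ring
    calc ∫⁻ y, G y ≤ ENNReal.ofReal 8 ^ n * M * Q.vol / S :=
          (ENNReal.le_div_iff_mul_le (.inl (by simpa [S] using hs)) (.inl ofReal_ne_top)).2
            (by rwa [mul_comm])
      _ = ENNReal.ofReal 8 ^ n / S * M * Q.vol := by simp only [div_eq_mul_inv]; ring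
  calc ∫⁻ y in Q.set, locSharpMax s Q₀ f y
      ≤ ∫⁻ y in Q.set, (ENNReal.ofReal 7 ^ n / S * M + G y) :=
        setLIntegral_mono' Q.measurableSet_set fun y hy =>
          locSharpMax_le_add hs hf hQ hP _ hy
    _ = ENNReal.ofReal 7 ^ n / S * M * Q.vol + ∫⁻ y in Q.set, G y := by
        rw [lintegral_add_left measurable_const, setLIntegral_const, Cube.vol]
    _ ≤ ENNReal.ofReal 7 ^ n / S * M * Q.vol + ENNReal.ofReal 8 ^ n / S * M * Q.vol := by
        gcongr
        exact (setLIntegral_le_lintegral _ _).trans hG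
    _ = _ := by rw [ENNReal.add_div, add_mul, add_mul]

/-- There is `s₀ ∈ (0,1)` depending only on `n` such that for all
`s ∈ (0,s₀)`, `f ∈ L¹(Q₀)` and `x ∈ Q₀`:
`M_{Q₀}(M^#_{s,Q₀} f)(x) ≤ (2·8ⁿ/s) f^#_{Q₀}(x)`. -/
theorem garsia_rodemich_stmt3 (n : ℕ) :
    ∃ s₀ ∈ Set.Ioo (0:ℝ) 1, ∀ Q₀ : Cube n, volume Q₀.set = 1 →
      ∀ s ∈ Set.Ioo (0:ℝ) s₀, ∀ f : (Fin n → ℝ) → ℝ, IntegrableOn f Q₀.set volume →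
        ∀ x ∈ Q₀.set,
          hlMaxE Q₀ (locSharpMax s Q₀ f) x ≤
            (2 * 8 ^ n / ENNReal.ofReal s) * sharpMax Q₀ f x := by
  refine ⟨1 / 2, by norm_num, fun Q₀ _ s hs f hf x _ => iSup₂_le fun Q hQ => ?_⟩
  rw [ENNReal.div_le_iff Q.vol_ne_zero Q.vol_ne_top]
  refine (setLIntegral_locSharpMax_le hs.1 hf hQ).trans ?_
  gcongr
  calc ENNReal.ofReal 7 ^ n + ENNReal.ofReal 8 ^ n ≤ 8 ^ n + 8 ^ n := by
        gcongr <;> norm_num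
    _ = 2 * 8 ^ n := (two_mul _).symm

end
end

section
/- Let f ∈ L¹(Q₀) and let γ ∈ Γ_f. Then f^#_{Q₀}(x) ≤ M_{Q₀}γ(x) for every x ∈ Q₀. -/
open MeasureTheory ENNReal NNReal Set Filter

noncomputable section

variable {n : ℕ}

/-! Testing `γ ∈ Γ_f` on the one-cube packing `{Q}` bounds `|Q|⁻¹ ∫_Q ∫_Q |f x - f y|` by
`∫_Q γ`. On the other hand `f x - f_Q` is the `Q`-average of `y ↦ f x - f y`, so the mean
oscillation of `f` on `Q` is at most the double average of `|f x - f y|` over `Q × Q`, hence at most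
`|Q|⁻¹ ∫_Q |γ|`. Taking the supremum over the cubes `Q ∋ x` gives the claim. -/

theorem Cube.volume_set_ne_zero (Q : Cube n) : volume Q.set ≠ 0 := by
  simp [Cube.set, Real.volume_Icc_pi, Q.side_pos]

theorem Cube.volume_set_ne_top (Q : Cube n) : volume Q.set ≠ ∞ :=
  isCompact_Icc.measure_ne_top

theorem cubeAvg_eq_setAverage (f : (Fin n → ℝ) → ℝ) (Q : Cube n) :
    cubeAvg f Q = ⨍ x in Q.set, f x := by
  rw [cubeAvg, setAverage_eq, measureReal_def, smul_eq_mul, inv_mul_eq_div]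

theorem IsPacking.singleton {Q₀ Q : Cube n} (hQ : Q.set ⊆ Q₀.set) : IsPacking Q₀ {Q} :=
  ⟨countable_singleton Q, by simpa using hQ, pairwise_singleton _ _⟩

section Average

variable {α E : Type*} [MeasurableSpace α] {μ : Measure α} [NormedAddCommGroup E]
  [NormedSpace ℝ E]

theorem MeasureTheory.enorm_average_le_laverage (g : α → E) :
    ‖⨍ x, g x ∂μ‖ₑ ≤ ⨍⁻ x, ‖g x‖ₑ ∂μ :=
  enorm_integral_le_lintegral_enorm g

theorem MeasureTheory.sub_setAverage_eq_setAverage_sub [CompleteSpace E] {s : Set α}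
    (hs₀ : μ s ≠ 0) (hs : μ s ≠ ∞) {f : α → E} (hf : IntegrableOn f s μ) (c : E) :
    c - ⨍ y in s, f y ∂μ = ⨍ y in s, (c - f y) ∂μ := by
  have : IsFiniteMeasure (μ.restrict s) := isFiniteMeasure_restrict.2 hs
  have : NeZero (μ.restrict s) := ⟨by simpa using hs₀⟩
  conv_lhs => rw [← average_const (μ.restrict s) c]
  exact (integral_sub (integrable_const c) hf.to_average).symm

theorem MeasureTheory.setLAverage_enorm_sub_setAverage_le [CompleteSpace E] {s : Set α}
    (hs₀ : μ s ≠ 0) (hs : μ s ≠ ∞) {f : α → E} (hf : IntegrableOn f s μ) :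
    ⨍⁻ x in s, ‖f x - ⨍ y in s, f y ∂μ‖ₑ ∂μ ≤ ⨍⁻ x in s, ⨍⁻ y in s, ‖f x - f y‖ₑ ∂μ ∂μ :=
  setLAverage_mono_ae s <| .of_forall fun x => by
    simpa only [sub_setAverage_eq_setAverage_sub hs₀ hs hf] using
      enorm_average_le_laverage (μ := μ.restrict s) fun y => f x - f y

theorem MeasureTheory.ofReal_integral_le_lintegral_ofReal_abs (g : α → ℝ) :
    ENNReal.ofReal (∫ x, g x ∂μ) ≤ ∫⁻ x, ENNReal.ofReal |g x| ∂μ := by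
  simpa only [Real.enorm_eq_ofReal_abs] using
    (Real.ofReal_le_enorm _).trans (enorm_integral_le_lintegral_enorm g)

end Average

theorem dblOsc_div_vol_eq_setLAverage (f : (Fin n → ℝ) → ℝ) (Q : Cube n) :
    dblOsc f Q / Q.vol = ⨍⁻ x in Q.set, ⨍⁻ y in Q.set, ‖f x - f y‖ₑ ∂volume ∂volume := by
  simp only [dblOsc, Cube.vol, setLAverage_eq, div_eq_mul_inv, Real.enorm_eq_ofReal_abs,
    lintegral_mul_const' _ _ (ENNReal.inv_ne_top.2 Q.volume_set_ne_zero)]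

theorem oscAvg_le_dblOsc_div_vol {f : (Fin n → ℝ) → ℝ} {Q : Cube n}
    (hf : IntegrableOn f Q.set volume) : oscAvg f Q ≤ dblOsc f Q / Q.vol := by
  rw [dblOsc_div_vol_eq_setLAverage, oscAvg, cubeAvg_eq_setAverage, Cube.vol]
  simpa only [setLAverage_eq, Real.enorm_eq_ofReal_abs] using
    setLAverage_enorm_sub_setAverage_le Q.volume_set_ne_zero Q.volume_set_ne_top hf

theorem MemGamma.dblOsc_le {Q₀ Q : Cube n} {f γ : (Fin n → ℝ) → ℝ}
    (hγ : MemGamma Q₀ f γ) (hQ : Q.set ⊆ Q₀.set) :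
    dblOsc f Q ≤ ENNReal.ofReal (∫ x in Q.set, γ x) := by
  simpa using hγ.2 {Q} (.singleton hQ)

theorem garsia_rodemich_stmt7_general {n : ℕ} (Q₀ : Cube n)
    (f γ : (Fin n → ℝ) → ℝ) (hf : IntegrableOn f Q₀.set volume)
    (hγ : MemGamma Q₀ f γ) :
    ∀ x ∈ Q₀.set, sharpMax Q₀ f x ≤ hlMax Q₀ γ x := by
  intro x _
  refine iSup₂_le fun Q hQ => ?_
  calc oscAvg f Q
      ≤ dblOsc f Q / Q.vol := oscAvg_le_dblOsc_div_vol (hf.mono_set hQ.1)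
    _ ≤ ENNReal.ofReal (∫ y in Q.set, γ y) / Q.vol := by gcongr; exact hγ.dblOsc_le hQ.1
    _ ≤ (∫⁻ y in Q.set, ENNReal.ofReal |γ y|) / Q.vol := by
        gcongr; exact ofReal_integral_le_lintegral_ofReal_abs γ
    _ ≤ hlMax Q₀ γ x :=
        le_biSup (fun Q' : Cube n => (∫⁻ y in Q'.set, ENNReal.ofReal |γ y|) / Q'.vol) hQ

/-- If `f ∈ L¹(Q₀)` and `γ ∈ Γ_f`, then
`f^#_{Q₀}(x) ≤ M_{Q₀} γ (x)` for all `x ∈ Q₀`. -/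
theorem garsia_rodemich_stmt7 {n : ℕ} (Q₀ : Cube n) (hQ₀ : volume Q₀.set = 1)
    (f γ : (Fin n → ℝ) → ℝ) (hf : IntegrableOn f Q₀.set volume)
    (hγ : MemGamma Q₀ f γ) :
    ∀ x ∈ Q₀.set, sharpMax Q₀ f x ≤ hlMax Q₀ γ x :=
  garsia_rodemich_stmt7_general Q₀ f γ hf hγ

end
end
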